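/- arXiv:1312.6600 — 9 statements merged into one kernel-verified Lean document; each statement's English description precedes it below -/
import Mathlib

section
/- Let q be the unique positive real satisfying coth q = q. If a is a positive real number with a < exp(-1/(2*sinh q)) or a > exp(1/(2*sinh q)), then the equation a^x + a^{-x} = x has no real solution x. -/
/-- Tangent line inequality for cosh at the point q (with sinh q > 0). -/
lemma cosh_tangent (q u : ℝ) (hq : 0 < Real.sinh q) :
    Real.cosh q + Real.sinh q * (u - q) ≤ Real.cosh u := by
  have hv : Real.cosh u = Real.cosh q * Real.cosh (u - q) + Real.sinh q * Real.sinh (u - q) := by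
    have := Real.cosh_add q (u - q)
    simpa using this
  set v := u - q with hvdef
  have h1 : v + 1 ≤ Real.exp v := Real.add_one_le_exp v
  have h2 : Real.cosh v + Real.sinh v = Real.exp v := Real.cosh_add_sinh v
  have h3 : (1:ℝ) ≤ Real.cosh v := Real.one_le_cosh v
  have h4 : Real.sinh q ≤ Real.cosh q := by
    have := Real.cosh_sub_sinh q
    nlinarith [Real.exp_pos (-q)]
  nlinarith [mul_nonneg (sub_nonneg.mpr h4) (sub_nonneg.mpr h3),
    mul_nonneg hq.le (by nlinarith : (0:ℝ) ≤ (Real.cosh v - 1) - (v - Real.sinh v))]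

theorem stmt_3 (q : ℝ) (hq : 0 < q) (hcoth : Real.cosh q / Real.sinh q = q)
    (a : ℝ) (ha : 0 < a)
    (hrange : a < Real.exp (-1 / (2 * Real.sinh q)) ∨ Real.exp (1 / (2 * Real.sinh q)) < a) :
    ¬ ∃ x : ℝ, a ^ x + a ^ (-x) = x := by
  rintro ⟨x, hx⟩
  have hs : 0 < Real.sinh q := Real.sinh_pos_iff.mpr hq
  set t₀ : ℝ := 1 / (2 * Real.sinh q) with ht₀def
  have ht₀ : 0 < t₀ := by positivity
  set t : ℝ := Real.log a with htdef
  -- rewrite powers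
  have hpow : ∀ y : ℝ, a ^ y = Real.exp (t * y) := fun y => by
    rw [Real.rpow_def_of_pos ha]
  have hx' : Real.exp (t * x) + Real.exp (-(t * x)) = x := by
    rw [hpow x, hpow (-x), mul_neg] at hx; exact hx
  have hx2 : 2 * Real.cosh (t * x) = x := by
    rw [Real.cosh_eq]; linarith [hx']
  -- x ≥ 2
  have hxpos : 0 < x := by
    have := Real.one_le_cosh (t * x); linarith
  -- |t| > t₀
  have habs : t₀ < |t| := by
    rcases hrange with h | h
    · have : t < -t₀ := by
        rw [htdef]
        calc Real.log a < Real.log (Real.exp (-1 / (2 * Real.sinh q))) :=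
              Real.log_lt_log ha h
          _ = -t₀ := by rw [Real.log_exp]; ring
      have := neg_abs_le t; linarith
    · have : t₀ < t := by
        rw [htdef, ht₀def]
        have := Real.log_lt_log (Real.exp_pos _) h
        rwa [Real.log_exp] at this
      have := le_abs_self t; linarith
  -- cosh q = q * sinh q
  have hcq : Real.cosh q = q * Real.sinh q := by
    field_simp at hcoth; linarith [hcoth]
  -- tangent line bound at u = t₀ * x
  have htan : x ≤ 2 * Real.cosh (t₀ * x) := by
    have := cosh_tangent q (t₀ * x) hs
    have ht0x : Real.sinh q * (t₀ * x) = x / 2 := by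
      rw [ht₀def]; field_simp
    nlinarith
  -- strict monotonicity of cosh
  have hmono : Real.cosh (t₀ * x) < Real.cosh (t * x) := by
    rw [Real.cosh_lt_cosh]
    rw [abs_mul, abs_mul, abs_of_pos ht₀, abs_of_pos hxpos]
    exact mul_lt_mul_of_pos_right habs hxpos
  linarith
end

section
/- Let q be the unique positive real satisfying coth q = q, and let a = exp(1/(2*sinh q)). Then the equation a^x + a^{-x} = x has exactly one real solution, namely x = 2*cosh q; that is, for every real x, a^x + a^{-x} = x if and only if x = 2*cosh q. -/
lemma tangent_line (q : ℝ) (hq : 0 < q) (hcq : Real.cosh q = q * Real.sinh q)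
    (u : ℝ) (hu : u ≠ q) : Real.sinh q * u < Real.cosh u := by
  have hs : 0 < Real.sinh q := Real.sinh_pos_iff.2 hq
  set d := u - q with hd
  have hdne : d ≠ 0 := fun h => hu (by linarith [sub_eq_zero.mp h])
  have h1 : Real.cosh u = Real.cosh q * Real.cosh d + Real.sinh q * Real.sinh d := by
    have : u = q + d := by ring
    rw [this, Real.cosh_add]
  have h2 : 1 ≤ Real.cosh d := Real.one_le_cosh d
  have h3 : Real.sinh q < Real.cosh q := Real.sinh_lt_cosh q
  have h4 : Real.cosh d + Real.sinh d = Real.exp d := Real.cosh_add_sinh d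
  have h5 : d + 1 < Real.exp d := Real.add_one_lt_exp hdne
  nlinarith [mul_pos hs (show (0:ℝ) < Real.exp d - 1 - d by linarith),
    mul_nonneg (le_of_lt (sub_pos.mpr h3)) (sub_nonneg.mpr h2)]

theorem stmt_4 (q : ℝ) (hq : 0 < q) (hcoth : Real.cosh q / Real.sinh q = q)
    (a : ℝ) (ha : a = Real.exp (1 / (2 * Real.sinh q))) :
    ∀ x : ℝ, a ^ x + a ^ (-x) = x ↔ x = 2 * Real.cosh q := by
  have hs : 0 < Real.sinh q := Real.sinh_pos_iff.2 hq
  have hcq : Real.cosh q = q * Real.sinh q := by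
    field_simp at hcoth; linarith
  have hexp : ∀ x : ℝ, a ^ x + a ^ (-x) = 2 * Real.cosh (x / (2 * Real.sinh q)) := by
    intro x
    have hap : (0:ℝ) < a := ha ▸ Real.exp_pos _
    rw [Real.rpow_def_of_pos hap, Real.rpow_def_of_pos hap, ha, Real.log_exp,
      Real.cosh_eq]
    have h1 : 1 / (2 * Real.sinh q) * x = x / (2 * Real.sinh q) := by ring
    have h2 : 1 / (2 * Real.sinh q) * (-x) = -(x / (2 * Real.sinh q)) := by ring
    rw [h1, h2]; ring
  intro x
  constructor
  · intro h
    rw [hexp x] at h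
    set u := x / (2 * Real.sinh q) with hu
    have hx : x = 2 * Real.sinh q * u := by rw [hu]; field_simp [hs.ne']
    have huq : u = q := by
      by_contra hne
      have := tangent_line q hq hcq u hne
      nlinarith
    rw [hx, huq]; nlinarith
  · intro h
    rw [hexp x, h]
    have : 2 * Real.cosh q / (2 * Real.sinh q) = q := by
      field_simp; nlinarith
    rw [this]
end

section
/- Let q be the unique positive real satisfying coth q = q, and let a = exp(-1/(2*sinh q)). Then the equation a^x + a^{-x} = x has exactly one real solution, namely x = 2*cosh q; that is, for every real x, a^x + a^{-x} = x if and only if x = 2*cosh q. -/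
theorem stmt_5 (q : ℝ) (hq : 0 < q) (hcoth : Real.cosh q / Real.sinh q = q)
    (a : ℝ) (ha : a = Real.exp (-1 / (2 * Real.sinh q))) :
    ∀ x : ℝ, a ^ x + a ^ (-x) = x ↔ x = 2 * Real.cosh q := by
  have hs : 0 < Real.sinh q := by
    rw [Real.sinh_eq]
    have := Real.exp_lt_exp.mpr (show -q < q by linarith)
    linarith
  have hc : Real.cosh q = Real.sinh q * q := by
    field_simp at hcoth
    linarith
  have hax : ∀ y : ℝ, a ^ y = Real.exp (-1 / (2 * Real.sinh q) * y) := by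
    intro y
    rw [ha, Real.rpow_def_of_pos (Real.exp_pos _), Real.log_exp]
  have key : ∀ t : ℝ, t ≠ q → 2 * Real.sinh q * t < Real.exp t + Real.exp (-t) := by
    intro t ht
    have h1 : (t - q) + 1 < Real.exp (t - q) := Real.add_one_lt_exp (sub_ne_zero.mpr ht)
    have h2 : (q - t) + 1 < Real.exp (q - t) :=
      Real.add_one_lt_exp (sub_ne_zero.mpr (Ne.symm ht))
    have e1 : Real.exp t = Real.exp q * Real.exp (t - q) := by
      rw [← Real.exp_add]; ring_nf
    have e2 : Real.exp (-t) = Real.exp (-q) * Real.exp (q - t) := by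
      rw [← Real.exp_add]; ring_nf
    have hq1 : 0 < Real.exp q := Real.exp_pos q
    have hq2 : 0 < Real.exp (-q) := Real.exp_pos _
    have hsinh : Real.exp q - Real.exp (-q) = 2 * Real.sinh q := by
      rw [Real.sinh_eq]; ring
    have hlin : (Real.exp q - Real.exp (-q)) * (t - q) = 2 * Real.sinh q * (t - q) := by
      rw [hsinh]
    nlinarith [mul_lt_mul_of_pos_left h1 hq1, mul_lt_mul_of_pos_left h2 hq2, hc, hlin,
      Real.cosh_eq q]
  intro x
  have hval : a ^ x + a ^ (-x) = Real.exp (x / (2 * Real.sinh q)) +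
      Real.exp (-(x / (2 * Real.sinh q))) := by
    have e1 : -1 / (2 * Real.sinh q) * x = -(x / (2 * Real.sinh q)) := by ring
    have e2 : -1 / (2 * Real.sinh q) * (-x) = x / (2 * Real.sinh q) := by ring
    rw [hax x, hax (-x), e1, e2]
    ring
  constructor
  · intro hx
    by_contra hne
    set t := x / (2 * Real.sinh q) with htdef
    have hxt : x = 2 * Real.sinh q * t := by
      rw [htdef]; field_simp
    have htq : t ≠ q := by
      intro h
      apply hne
      rw [hxt, h, hc]; ring
    have hk := key t htq
    rw [hval] at hx
    linarith
  · intro hx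
    subst hx
    rw [hval]
    have h2s : (2 * Real.sinh q) ≠ 0 := by positivity
    have : (2 * Real.cosh q) / (2 * Real.sinh q) = q := by
      rw [hc]; field_simp
    rw [this, Real.cosh_eq]; ring
end

section
/- Let q be the unique positive real satisfying coth q = q. If a is a positive real number with exp(-1/(2*sinh q)) < a < exp(1/(2*sinh q)) and a ≠ 1, then the equation a^x + a^{-x} = x has exactly two real solutions; that is, there exist real numbers x1 < x2 such that for every real x, a^x + a^{-x} = x if and only if x = x1 or x = x2. -/
open Real Set

private lemma sc_exp_mul (t : ℝ) (ht : t ≠ 0) :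
    StrictConvexOn ℝ Set.univ (fun x : ℝ => Real.exp (t * x)) := by
  refine ⟨convex_univ, ?_⟩
  intro x _ y _ hxy a b ha hb hab
  have hxy' : t * x ≠ t * y := by
    intro h; exact hxy (mul_left_cancel₀ ht h)
  have := strictConvexOn_exp.2 (mem_univ (t * x)) (mem_univ (t * y)) hxy' ha hb hab
  simpa [smul_eq_mul, mul_add, mul_left_comm, mul_comm, mul_assoc] using this

private lemma sc_g (t : ℝ) (ht : t ≠ 0) :
    StrictConvexOn ℝ Set.univ (fun x : ℝ => Real.exp (t * x) + Real.exp (-(t * x)) - x) := by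
  have h1 := sc_exp_mul t ht
  have h2 := sc_exp_mul (-t) (neg_ne_zero.mpr ht)
  have h2' : StrictConvexOn ℝ Set.univ (fun x : ℝ => Real.exp (-(t * x))) := by
    simpa [neg_mul] using h2
  have h12 := h1.add h2'
  have hlin : ConvexOn ℝ Set.univ (fun x : ℝ => -x) := by
    refine ⟨convex_univ, ?_⟩
    intro x _ y _ a b ha hb hab
    simp [smul_eq_mul]
  have := h12.add_convexOn hlin
  convert this using 1
  · rfl
  · funext x; simp [sub_eq_add_neg]

private lemma sc_between {g : ℝ → ℝ} (hg : StrictConvexOn ℝ Set.univ g)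
    {p y r : ℝ} (hpy : p < y) (hyr : y < r) (hp : g p = 0) (hr : g r = 0) :
    g y < 0 := by
  have hpr : p < r := hpy.trans hyr
  have hsub : (0:ℝ) < r - p := by linarith
  have hApos : 0 < (r - y) / (r - p) := div_pos (by linarith) hsub
  have hBpos : 0 < (y - p) / (r - p) := div_pos (by linarith) hsub
  have hAB : (r - y) / (r - p) + (y - p) / (r - p) = 1 := by field_simp; ring
  have hy : ((r - y) / (r - p)) * p + ((y - p) / (r - p)) * r = y := by field_simp; ring
  have := hg.2 (mem_univ p) (mem_univ r) (ne_of_lt hpr) hApos hBpos hAB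
  rw [smul_eq_mul, smul_eq_mul, smul_eq_mul, smul_eq_mul, hy, hp, hr] at this
  linarith

private lemma auxmain (q : ℝ) (hq : 0 < q) (hcoth : Real.cosh q / Real.sinh q = q)
    (t : ℝ) (ht : 0 < t) (ht2 : t < 1 / (2 * Real.sinh q)) :
    ∃ x1 x2 : ℝ, x1 < x2 ∧
      ∀ x : ℝ, Real.exp (t * x) + Real.exp (-(t * x)) = x ↔ x = x1 ∨ x = x2 := by
  set g : ℝ → ℝ := fun x => Real.exp (t * x) + Real.exp (-(t * x)) - x with hgdef
  have hgc : Continuous g := by fun_prop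
  have hsq : 0 < Real.sinh q := Real.sinh_pos_iff.mpr hq
  -- the minimum point
  set u : ℝ := Real.arsinh (1 / (2 * t)) with hu
  have hsinhu : Real.sinh u = 1 / (2 * t) := Real.sinh_arsinh _
  have huq : q < u := by
    have h2s : 0 < 2 * Real.sinh q := by positivity
    have ht2' : t * (2 * Real.sinh q) < 1 := by
      rw [lt_div_iff₀ h2s] at ht2; exact ht2
    have : Real.sinh q < Real.sinh u := by
      rw [hsinhu, lt_div_iff₀ (by positivity : (0:ℝ) < 2 * t)]
      nlinarith
    exact Real.sinh_lt_sinh.mp this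
  have hupos : 0 < u := hq.trans huq
  have hsinhu_pos : 0 < Real.sinh u := Real.sinh_pos_iff.mpr hupos
  set m : ℝ := u / t with hm
  have hmpos : 0 < m := div_pos hupos ht
  have htm : t * m = u := by rw [hm]; field_simp [ht.ne']
  have hgm : g m < 0 := by
    have hcosh : Real.exp u + Real.exp (-u) = 2 * Real.cosh u := by
      rw [Real.cosh_eq]; ring
    -- cosh u < u * sinh u
    have hkey : Real.cosh u < u * Real.sinh u := by
      have hs : Real.sinh (q - u) < 0 := Real.sinh_neg_iff.mpr (by linarith)
      rw [Real.sinh_sub] at hs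
      have h1 : Real.cosh u * Real.sinh q < Real.cosh q * Real.sinh u := by
        nlinarith [Real.cosh_pos q, Real.cosh_pos u]
      have h2 : Real.cosh q = q * Real.sinh q := by
        field_simp at hcoth; linarith [hcoth]
      nlinarith [mul_pos hsinhu_pos hsq, hsq, hsinhu_pos, mul_lt_mul_of_pos_right huq hsinhu_pos]
    have hmval : m = 2 * u * Real.sinh u := by
      rw [hm, hsinhu] at *
      field_simp [hsinhu]
    simp only [hgdef, htm, hcosh]
    rw [hmval]; nlinarith
  have hg0 : g 0 = 2 := by simp [hgdef]; norm_num
  -- a point to the right where g is positive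
  set R : ℝ := max (m + 1) (4 / t ^ 2) with hR
  have hmR : m < R := lt_of_lt_of_le (by linarith) (le_max_left _ _)
  have hRge : 4 / t ^ 2 ≤ R := le_max_right _ _
  have hRpos : 0 < R := hmpos.trans hmR
  have hgR : 0 < g R := by
    have h1 : 1 + t * R / 2 ≤ Real.exp (t * R / 2) := by
      have := Real.add_one_le_exp (t * R / 2); linarith
    have h2 : Real.exp (t * R / 2) ^ 2 = Real.exp (t * R) := by
      rw [← Real.exp_nat_mul]; norm_num; ring_nf
    have h3 : (1 + t * R / 2) ^ 2 ≤ Real.exp (t * R) := by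
      rw [← h2]
      have hnn : 0 ≤ 1 + t * R / 2 := by positivity
      nlinarith [h1]
    have hR2 : R ≤ t ^ 2 * R ^ 2 / 4 := by
      rw [div_le_iff₀ (by positivity : (0:ℝ) < t ^ 2)] at hRge
      nlinarith
    have h4 : 0 < Real.exp (-(t * R)) := Real.exp_pos _
    simp only [hgdef]
    nlinarith
  -- zeros via IVT
  have hx1 : ∃ x1 ∈ Ioo (0:ℝ) m, g x1 = 0 := by
    have := intermediate_value_Ioo' (le_of_lt hmpos) (hgc.continuousOn (s := Icc 0 m))
    have h0 : (0:ℝ) ∈ Ioo (g m) (g 0) := ⟨hgm, by rw [hg0]; norm_num⟩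
    obtain ⟨x1, hx1mem, hx1⟩ := this h0
    exact ⟨x1, hx1mem, hx1⟩
  have hx2 : ∃ x2 ∈ Ioo m R, g x2 = 0 := by
    have := intermediate_value_Ioo (le_of_lt hmR) (hgc.continuousOn (s := Icc m R))
    have h0 : (0:ℝ) ∈ Ioo (g m) (g R) := ⟨hgm, hgR⟩
    obtain ⟨x2, hx2mem, hx2⟩ := this h0
    exact ⟨x2, hx2mem, hx2⟩
  obtain ⟨x1, ⟨hx1l, hx1r⟩, hgx1⟩ := hx1
  obtain ⟨x2, ⟨hx2l, hx2r⟩, hgx2⟩ := hx2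
  have hx12 : x1 < x2 := hx1r.trans hx2l
  have hsc := sc_g t (ne_of_gt ht)
  refine ⟨x1, x2, hx12, fun x => ?_⟩
  constructor
  · intro hx
    have hgx : g x = 0 := by simp only [hgdef]; linarith
    by_contra hcon
    push_neg at hcon
    obtain ⟨hne1, hne2⟩ := hcon
    rcases lt_trichotomy x x1 with h | h | h
    · have h5 := sc_between hsc h (hx1r.trans hx2l) hgx hgx2
      have h6 : Real.exp (t * x1) + Real.exp (-(t * x1)) - x1 = 0 := hgx1
      linarith
    · exact hne1 h
    · rcases lt_trichotomy x x2 with h' | h' | h'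
      · have h5 := sc_between hsc h h' hgx1 hgx2
        have h6 : Real.exp (t * x) + Real.exp (-(t * x)) - x = 0 := hgx
        linarith
      · exact hne2 h'
      · have h5 := sc_between hsc hx12 h' hgx1 hgx
        have h6 : Real.exp (t * x2) + Real.exp (-(t * x2)) - x2 = 0 := hgx2
        linarith
  · rintro (rfl | rfl)
    · simp only [hgdef] at hgx1; linarith
    · simp only [hgdef] at hgx2; linarith

theorem stmt_6 (q : ℝ) (hq : 0 < q) (hcoth : Real.cosh q / Real.sinh q = q)
    (a : ℝ) (ha : 0 < a) (ha1 : a ≠ 1)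
    (hlo : Real.exp (-1 / (2 * Real.sinh q)) < a)
    (hhi : a < Real.exp (1 / (2 * Real.sinh q))) :
    ∃ x1 x2 : ℝ, x1 < x2 ∧ ∀ x : ℝ, a ^ x + a ^ (-x) = x ↔ x = x1 ∨ x = x2 := by
  have hsq : 0 < Real.sinh q := Real.sinh_pos_iff.mpr hq
  set s : ℝ := Real.log a with hs
  have hsne : s ≠ 0 := Real.log_ne_zero_of_pos_of_ne_one ha ha1
  set t : ℝ := |s| with htdef
  have ht : 0 < t := abs_pos.mpr hsne
  have ht2 : t < 1 / (2 * Real.sinh q) := by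
    rcases abs_cases s with ⟨he, hnn⟩ | ⟨he, hneg⟩
    · rw [htdef, he, hs]
      exact (Real.log_lt_iff_lt_exp ha).mpr hhi
    · rw [htdef, he]
      have : -1 / (2 * Real.sinh q) < s := (Real.lt_log_iff_exp_lt ha).mpr hlo
      have : -(1 / (2 * Real.sinh q)) < s := by
        rw [neg_div] at this; exact this
      linarith
  have heq : ∀ x : ℝ, a ^ x + a ^ (-x) = Real.exp (t * x) + Real.exp (-(t * x)) := by
    intro x
    rw [Real.rpow_def_of_pos ha, Real.rpow_def_of_pos ha, ← hs]
    rcases abs_cases s with ⟨he, _⟩ | ⟨he, _⟩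
    · rw [htdef, he]; ring_nf
    · rw [htdef, he]; ring_nf
  obtain ⟨x1, x2, h12, hiff⟩ := auxmain q hq hcoth t ht ht2
  exact ⟨x1, x2, h12, fun x => by rw [heq x]; exact hiff x⟩
end

section
/- Let a be a positive real number with a ≠ 1, and define f : ℝ → ℝ by f(x) = a^x + a^{-x} - x. Then x* = arcsinh(1/(2*ln a)) / ln a is the unique global minimizer of f: f(x*) ≤ f(x) for all real x, with equality only when x = x*. -/
lemma key9 (L u t : ℝ) (hL : L ≠ 0) (hu : Real.exp u - Real.exp (-u) = 1 / L)
    (ht : t ≠ 0) :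
    Real.exp u + Real.exp (-u) < Real.exp (u + L * t) + Real.exp (-(u + L * t)) - t := by
  have hA := Real.exp_pos u
  have hB := Real.exp_pos (-u)
  have hp := Real.exp_pos (L * t)
  have hq := Real.exp_pos (-(L * t))
  have hLt : L * t ≠ 0 := mul_ne_zero hL ht
  have h1 : L * t + 1 < Real.exp (L * t) := Real.add_one_lt_exp hLt
  have h2 : -(L * t) + 1 < Real.exp (-(L * t)) := Real.add_one_lt_exp (neg_ne_zero.2 hLt)
  have e1 : Real.exp (u + L * t) = Real.exp u * Real.exp (L * t) := Real.exp_add u (L * t)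
  have e2 : Real.exp (-(u + L * t)) = Real.exp (-u) * Real.exp (-(L * t)) := by
    rw [neg_add, Real.exp_add]
  have huL : L * (Real.exp u - Real.exp (-u)) = 1 := by
    rw [hu]; field_simp
  rw [e1, e2]
  have hsum : 0 < Real.exp (L * t) + Real.exp (-(L * t)) - 2 := by linarith
  rcases hL.lt_or_gt with h | h
  · nlinarith [mul_pos (neg_pos.2 h) hA, mul_pos (mul_pos (neg_pos.2 h) hA) hsum, h2]
  · nlinarith [mul_pos h hB, mul_pos (mul_pos h hB) hsum, h1]

theorem stmt_9 (a : ℝ) (ha : 0 < a) (ha1 : a ≠ 1)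
    (f : ℝ → ℝ) (hf : f = fun x : ℝ => a ^ x + a ^ (-x) - x)
    (xs : ℝ) (hxs : xs = Real.arsinh (1 / (2 * Real.log a)) / Real.log a) :
    (∀ x : ℝ, f xs ≤ f x) ∧ ∀ x : ℝ, f x = f xs → x = xs := by
  set L := Real.log a with hLdef
  have hL : L ≠ 0 := by
    intro h
    rcases Real.log_eq_zero.1 h with h' | h' | h'  <;> (simp_all; try linarith)
  have hux : L * xs = Real.arsinh (1 / (2 * L)) := by
    rw [hxs]; field_simp
  have hu : Real.exp (L * xs) - Real.exp (-(L * xs)) = 1 / L := by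
    have h := Real.sinh_arsinh (1 / (2 * L))
    rw [Real.sinh_eq] at h
    rw [hux]
    field_simp at h ⊢
    linarith
  have hfx : ∀ x : ℝ, f x = Real.exp (L * x) + Real.exp (-(L * x)) - x := by
    intro x
    rw [hf]
    simp only
    rw [Real.rpow_def_of_pos ha, Real.rpow_def_of_pos ha, mul_neg]
  have hstrict : ∀ x : ℝ, x ≠ xs → f xs < f x := by
    intro x hx
    have ht : x - xs ≠ 0 := sub_ne_zero.2 hx
    have := key9 L (L * xs) (x - xs) hL hu ht
    have harg : L * xs + L * (x - xs) = L * x := by ring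
    rw [harg] at this
    rw [hfx x, hfx xs]
    linarith
  constructor
  · intro x
    rcases eq_or_ne x xs with rfl | hx
    · exact le_refl _
    · exact (hstrict x hx).le
  · intro x hfeq
    by_contra hx
    exact absurd hfeq (ne_of_gt (by linarith [hstrict x hx]))
end

section
/- Let q be the unique positive real satisfying coth q = q, let a be a positive real with a ≠ 1, and set x* = arcsinh(1/(2*ln a)) / ln a. Then the minimum value 2*cosh(arcsinh(1/(2*ln a))) - x* of f(x) = a^x + a^{-x} - x equals 0 if and only if a = exp(1/(2*sinh q)) or a = exp(-1/(2*sinh q)). -/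
lemma uniq_coth (q : ℝ) (hq : 0 < q) (hcq : Real.cosh q = q * Real.sinh q)
    (u : ℝ) (hu : 0 < u) (hcu : Real.cosh u = u * Real.sinh u) : u = q := by
  have hmono : StrictMonoOn (fun x : ℝ => x * Real.sinh x - Real.cosh x) (Set.Ici 0) := by
    apply strictMonoOn_of_deriv_pos (convex_Ici 0)
    · exact ((continuous_id.mul Real.continuous_sinh).sub Real.continuous_cosh).continuousOn
    · intro x hx
      rw [interior_Ici] at hx
      have hd : HasDerivAt (fun x : ℝ => x * Real.sinh x - Real.cosh x)
          (1 * Real.sinh x + x * Real.cosh x - Real.sinh x) x :=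
        ((hasDerivAt_id x).mul (Real.hasDerivAt_sinh x)).sub (Real.hasDerivAt_cosh x)
      rw [hd.deriv]
      have hc := Real.cosh_pos (x := x)
      have := mul_pos (Set.mem_Ioi.mp hx) hc
      linarith
  exact hmono.injOn (Set.mem_Ici.mpr hu.le) (Set.mem_Ici.mpr hq.le)
    (by show u * Real.sinh u - Real.cosh u = q * Real.sinh q - Real.cosh q
        rw [hcu, hcq]; ring)

theorem stmt_11 (q : ℝ) (hq : 0 < q) (hcoth : Real.cosh q / Real.sinh q = q)
    (a : ℝ) (ha : 0 < a) (ha1 : a ≠ 1)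
    (xs : ℝ) (hxs : xs = Real.arsinh (1 / (2 * Real.log a)) / Real.log a) :
    2 * Real.cosh (Real.arsinh (1 / (2 * Real.log a))) - xs = 0 ↔
      a = Real.exp (1 / (2 * Real.sinh q)) ∨ a = Real.exp (-1 / (2 * Real.sinh q)) := by
  have hsq : 0 < Real.sinh q := Real.sinh_pos_iff.mpr hq
  have hcq : Real.cosh q = q * Real.sinh q := by
    field_simp at hcoth; linarith
  have hL : Real.log a ≠ 0 := by
    intro h
    rcases Real.log_eq_zero.mp h with h | h | h
    · exact ha.ne' h
    · exact ha1 h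
    · linarith
  set L := Real.log a with hLdef
  set t : ℝ := 1 / (2 * L) with ht
  set u : ℝ := Real.arsinh t with hu
  have hsinh : Real.sinh u = t := Real.sinh_arsinh t
  have ht0 : t ≠ 0 := by
    rw [ht]
    exact one_div_ne_zero (mul_ne_zero two_ne_zero hL)
  have hLt : L = 1 / (2 * t) := by
    rw [ht]; field_simp
  constructor
  · intro h
    rw [hxs] at h
    have hcond : Real.cosh u = u * t := by
      have h1 : u / L = u * (2 * t) := by rw [hLt]; field_simp
      have : 2 * Real.cosh u = u * (2 * t) := by rw [← h1]; linarith
      linarith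
    have hu0 : u ≠ 0 := by
      intro h0; rw [h0] at hcond; simp [Real.cosh_zero] at hcond
    rcases lt_or_gt_of_ne hu0 with hneg | hpos
    · -- u < 0, then -u = q
      have hc2 : Real.cosh (-u) = (-u) * Real.sinh (-u) := by
        rw [Real.cosh_neg, Real.sinh_neg, hsinh, hcond]; ring
      have hequ : -u = q := uniq_coth q hq hcq (-u) (by linarith) hc2
      have htval : t = -Real.sinh q := by
        rw [← hsinh, show u = -q by linarith, Real.sinh_neg]
      right
      rw [← Real.exp_log ha, ← hLdef, hLt, htval]
      congr 1
      field_simp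
    · -- u > 0
      have hc2 : Real.cosh u = u * Real.sinh u := by rw [hsinh]; exact hcond
      have hequ : u = q := uniq_coth q hq hcq u hpos hc2
      have htval : t = Real.sinh q := by rw [← hsinh, hequ]
      left
      rw [← Real.exp_log ha, ← hLdef, hLt, htval]
  · intro h
    rcases h with h | h
    · have hLval : L = 1 / (2 * Real.sinh q) := by rw [hLdef, h, Real.log_exp]
      have htval : t = Real.sinh q := by rw [ht, hLval]; field_simp
      have huval : u = q := by rw [hu, htval, Real.arsinh_sinh]
      rw [hxs]
      show 2 * Real.cosh u - u / L = 0
      rw [huval, hLval, hcq]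
      field_simp
      ring
    · have hLval : L = -1 / (2 * Real.sinh q) := by rw [hLdef, h, Real.log_exp]
      have htval : t = -Real.sinh q := by rw [ht, hLval]; field_simp
      have huval : u = -q := by
        rw [hu, htval, ← Real.sinh_neg, Real.arsinh_sinh]
      rw [hxs]
      show 2 * Real.cosh u - u / L = 0
      rw [huval, hLval, Real.cosh_neg, hcq]
      field_simp
      ring
end

section
/- Let q be the unique positive real satisfying coth q = q, and let a be a positive real with exp(-1/(2*sinh q)) < a < exp(1/(2*sinh q)) and a ≠ 1. Then every real solution x of a^x + a^{-x} = x is positive; moreover, if x1 < x2 are the two real solutions, then 2 < x1 < 2*cosh q. -/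
theorem stmt_12 (q : ℝ) (hq : 0 < q) (hcoth : Real.cosh q / Real.sinh q = q)
    (a : ℝ) (ha : 0 < a) (ha1 : a ≠ 1)
    (hlo : Real.exp (-1 / (2 * Real.sinh q)) < a)
    (hhi : a < Real.exp (1 / (2 * Real.sinh q))) :
    (∀ x : ℝ, a ^ x + a ^ (-x) = x → 0 < x) ∧
    ∀ x1 x2 : ℝ, x1 < x2 → a ^ x1 + a ^ (-x1) = x1 → a ^ x2 + a ^ (-x2) = x2 →
      2 < x1 ∧ x1 < 2 * Real.cosh q := by
  have hs : 0 < Real.sinh q := Real.sinh_pos_iff.mpr hq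
  set c := Real.log a with hc
  have hcne : c ≠ 0 := by
    intro h
    have : a = Real.exp c := (Real.exp_log ha).symm
    rw [h, Real.exp_zero] at this
    exact ha1 this
  have habs : |c| < 1 / (2 * Real.sinh q) := by
    rw [abs_lt]
    constructor
    · rw [← Real.exp_lt_exp, Real.exp_log ha]
      rw [neg_div] at hlo; exact hlo
    · rw [← Real.exp_lt_exp, Real.exp_log ha]
      exact hhi
  have hrw : ∀ x : ℝ, a ^ x = Real.exp (c * x) := fun x => Real.rpow_def_of_pos ha x
  have hpos : ∀ x : ℝ, a ^ x + a ^ (-x) = x → 0 < x := by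
    intro x hx
    rw [hrw x, hrw (-x)] at hx
    have h1 := Real.exp_pos (c * x)
    have h2 := Real.exp_pos (c * (-x))
    linarith
  refine ⟨hpos, ?_⟩
  intro x1 x2 hlt h1 h2
  have hx1pos : 0 < x1 := hpos x1 h1
  have hx2pos : 0 < x2 := hpos x2 h2
  rw [hrw x1, hrw (-x1)] at h1
  rw [hrw x2, hrw (-x2)] at h2
  simp only [mul_neg] at h1 h2
  -- 2 < x1
  have ht1 : Real.exp (c * x1) ≠ 1 := by
    rw [Ne, Real.exp_eq_one_iff]
    exact mul_ne_zero hcne (ne_of_gt hx1pos)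
  have hmul : Real.exp (c * x1) * Real.exp (-(c * x1)) = 1 := by
    rw [← Real.exp_add]; simp
  have hgt2 : 2 < x1 := by
    have ht := Real.exp_pos (c * x1)
    have hsq : (0:ℝ) < (Real.exp (c * x1) - 1) ^ 2 := by
      have : Real.exp (c * x1) - 1 ≠ 0 := sub_ne_zero.mpr ht1
      positivity
    nlinarith [hsq, ht, hmul, h1]
  refine ⟨hgt2, ?_⟩
  -- x1 < 2 * cosh q
  by_contra hcon
  push_neg at hcon
  set x0 : ℝ := 2 * Real.cosh q with hx0def
  have hx0pos : 0 < x0 := by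
    have := Real.cosh_pos (x := q)
    positivity
  have hx0lt : Real.exp (c * x0) + Real.exp (-(c * x0)) < x0 := by
    have habs' : |c * x0| < q := by
      calc |c * x0| = |c| * x0 := by rw [abs_mul, abs_of_pos hx0pos]
        _ < 1 / (2 * Real.sinh q) * x0 := by
            exact mul_lt_mul_of_pos_right habs hx0pos
        _ = Real.cosh q / Real.sinh q := by
            rw [hx0def]; field_simp
        _ = q := hcoth
    have hcosh : Real.cosh (c * x0) < Real.cosh q := by
      rw [Real.cosh_lt_cosh, abs_of_pos hq]
      exact habs'
    have heq : Real.exp (c * x0) + Real.exp (-(c * x0)) = 2 * Real.cosh (c * x0) := by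
      rw [Real.cosh_eq]; ring
    rw [heq, hx0def]
    linarith
  have hx0lt1 : x0 < x1 := by
    rcases lt_or_eq_of_le hcon with h | h
    · exact h
    · rw [← h] at h1; linarith
  -- strict convexity contradiction
  have hd : 0 < x2 - x0 := by linarith
  set w1 : ℝ := (x2 - x1) / (x2 - x0) with hw1def
  set w2 : ℝ := (x1 - x0) / (x2 - x0) with hw2def
  have hw1 : 0 < w1 := div_pos (by linarith) hd
  have hw2 : 0 < w2 := div_pos (by linarith) hd
  have hsum : w1 + w2 = 1 := by
    rw [hw1def, hw2def]
    field_simp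
    ring
  have hcomb : w1 * x0 + w2 * x2 = x1 := by
    rw [hw1def, hw2def]
    field_simp
    ring
  have hne1 : c * x0 ≠ c * x2 := by
    intro h
    have := mul_left_cancel₀ hcne h
    linarith [hx0lt1, hlt]
  have hne2 : -(c * x0) ≠ -(c * x2) := fun h => hne1 (neg_injective h)
  have E1 := strictConvexOn_exp.2 (Set.mem_univ (c * x0)) (Set.mem_univ (c * x2)) hne1 hw1 hw2 hsum
  have E2 := strictConvexOn_exp.2 (Set.mem_univ (-(c * x0))) (Set.mem_univ (-(c * x2))) hne2 hw1 hw2 hsum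
  simp only [smul_eq_mul] at E1 E2
  have harg1 : w1 * (c * x0) + w2 * (c * x2) = c * x1 := by
    rw [← hcomb]; ring
  have harg2 : w1 * -(c * x0) + w2 * -(c * x2) = -(c * x1) := by
    rw [← hcomb]; ring
  rw [harg1] at E1
  rw [harg2] at E2
  have hstep := mul_lt_mul_of_pos_left hx0lt hw1
  nlinarith [E1, E2, hstep, h1, h2, hcomb, hw1, hw2]
end

section
/- Let q be the unique positive real satisfying coth q = q, let a be a positive real with exp(-1/(2*sinh q)) < a < exp(1/(2*sinh q)) and a ≠ 1, and set x* = arcsinh(1/(2*ln a)) / ln a. If x1 < x2 are the two real solutions of a^x + a^{-x} = x, then x* < x2 < 2*x* - 2. -/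
set_option maxHeartbeats 1000000

private lemma aux_L1 (t d : ℝ) (ht : 0 < t) (hd : 0 < d) :
    Real.cosh t - Real.cosh (t - d) < d * Real.sinh t := by
  rw [Real.cosh_sub]
  have h1 : d < Real.sinh d := Real.self_lt_sinh_iff.mpr hd
  have h2 : Real.sinh d - d < Real.cosh d - 1 := by
    have he : Real.cosh d - Real.sinh d = Real.exp (-d) := Real.cosh_sub_sinh d
    have := Real.add_one_lt_exp (x := -d) (by linarith : (-d : ℝ) ≠ 0)
    linarith
  have h3 : 0 < Real.sinh t := Real.sinh_pos_iff.mpr ht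
  have h4 : Real.sinh t < Real.cosh t := Real.sinh_lt_cosh t
  nlinarith [Real.cosh_pos t]

private lemma aux_L2 (t d : ℝ) (ht : 0 ≤ t) (hd : 0 ≤ d) :
    Real.cosh t + d * Real.sinh t + Real.cosh t / 2 * d ^ 2 ≤ Real.cosh (t + d) := by
  rw [Real.cosh_add]
  have h1 : d ≤ Real.sinh d := by
    rcases eq_or_lt_of_le hd with h | h
    · simp [← h]
    · exact (Real.self_lt_sinh_iff.mpr h).le
  have h15 : d / 2 ≤ Real.sinh (d / 2) := by
    rcases eq_or_lt_of_le hd with h | h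
    · rw [← h]; simp
    · exact (Real.self_lt_sinh_iff.mpr (by linarith)).le
  have h2 : 1 + d ^ 2 / 2 ≤ Real.cosh d := by
    have h2m := Real.cosh_two_mul (d / 2)
    have hs := Real.cosh_sq (d / 2)
    rw [show 2 * (d / 2) = d by ring] at h2m
    nlinarith
  have h3 : (0 : ℝ) < Real.cosh t := Real.cosh_pos t
  have h4 : (0 : ℝ) ≤ Real.sinh t := Real.sinh_nonneg_iff.mpr ht
  nlinarith [mul_nonneg h4 (by linarith : (0:ℝ) ≤ Real.sinh d - d)]

theorem stmt_13 (q : ℝ) (hq : 0 < q) (hcoth : Real.cosh q / Real.sinh q = q)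
    (a : ℝ) (ha : 0 < a) (ha1 : a ≠ 1)
    (hlo : Real.exp (-1 / (2 * Real.sinh q)) < a)
    (hhi : a < Real.exp (1 / (2 * Real.sinh q)))
    (xs : ℝ) (hxs : xs = Real.arsinh (1 / (2 * Real.log a)) / Real.log a)
    (x1 x2 : ℝ) (hx12 : x1 < x2)
    (h1 : a ^ x1 + a ^ (-x1) = x1) (h2 : a ^ x2 + a ^ (-x2) = x2) :
    xs < x2 ∧ x2 < 2 * xs - 2 := by
  have hsq : 0 < Real.sinh q := Real.sinh_pos_iff.mpr hq
  set c0 := Real.log a with hc0def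
  have hc0 : c0 ≠ 0 := by
    intro h
    rcases Real.log_eq_zero.mp h with h' | h' | h' <;> [linarith; exact ha1 h'; linarith]
  have hc0lt : c0 < 1 / (2 * Real.sinh q) := by
    have hel := Real.exp_log ha
    have h' : Real.exp c0 < Real.exp (1 / (2 * Real.sinh q)) := by
      rw [hc0def, hel]; exact hhi
    exact Real.exp_lt_exp.mp h'
  have hc0gt : -(1 / (2 * Real.sinh q)) < c0 := by
    have hel := Real.exp_log ha
    have h' : Real.exp (-(1 / (2 * Real.sinh q))) < Real.exp c0 := by
      rw [hc0def, hel, show -(1 / (2 * Real.sinh q)) = -1 / (2 * Real.sinh q) by ring]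
      exact hlo
    exact Real.exp_lt_exp.mp h'
  set c := |c0| with hcdef
  have hc : 0 < c := abs_pos.mpr hc0
  have hclt : c < 1 / (2 * Real.sinh q) := abs_lt.mpr ⟨hc0gt, hc0lt⟩
  set t := Real.arsinh (1 / (2 * c)) with htdef
  have hst : Real.sinh t = 1 / (2 * c) := Real.sinh_arsinh _
  have ht0 : 0 < t := by
    have h0 : 0 < Real.sinh t := by rw [hst]; positivity
    exact Real.sinh_pos_iff.mp h0
  set s := Real.sinh t with hsdef
  have hs_pos : 0 < s := Real.sinh_pos_iff.mpr ht0
  -- rewrite the equations via rpow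
  have key : ∀ x : ℝ, a ^ x + a ^ (-x) = 2 * Real.cosh (c * x) := by
    intro x
    rw [Real.rpow_def_of_pos ha, Real.rpow_def_of_pos ha, ← hc0def, Real.cosh_eq]
    rcases abs_choice c0 with h | h <;> rw [hcdef, h] <;> ring_nf
  have e1 : 2 * Real.cosh (c * x1) = x1 := by rw [← key x1]; exact h1
  have e2 : 2 * Real.cosh (c * x2) = x2 := by rw [← key x2]; exact h2
  have hxs' : xs = t / c := by
    rw [hxs, htdef, hcdef]
    rcases abs_choice c0 with h | h
    · rw [h]
    · rw [h, show (1:ℝ) / (2 * (-c0)) = -(1 / (2 * c0)) by rw [mul_neg, div_neg],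
        Real.arsinh_neg]
      ring
  set b1 := c * x1 with hb1def
  set b2 := c * x2 with hb2def
  clear_value b2 b1 s t c c0
  -- basic facts
  have hb12 : b1 < b2 := by
    rw [hb1def, hb2def]; exact mul_lt_mul_of_pos_left hx12 hc
  have h2sc : 2 * s * c = 1 := by
    rw [hst]; field_simp
  have hx1b : x1 = 2 * s * b1 := by
    rw [hb1def]; linear_combination (-x1) * h2sc
  have hx2b : x2 = 2 * s * b2 := by
    rw [hb2def]; linear_combination (-x2) * h2sc
  have eq1 : Real.cosh b1 = s * b1 := by
    linear_combination e1 / 2 + hx1b / 2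
  have eq2 : Real.cosh b2 = s * b2 := by
    linear_combination e2 / 2 + hx2b / 2
  have hxs2 : xs = 2 * s * t := by
    rw [hxs', div_eq_mul_one_div]
    have hinv : 1 / c = 2 * s := by
      field_simp at h2sc ⊢; linarith
    rw [hinv]; ring
  clear key hxs h1 h2 ha1 hlo hhi hc0 hc0lt hc0gt hcdef hb1def hb2def htdef hxs'
  -- sinh q < s, hence q < t
  have hsq_lt : Real.sinh q < s := by
    rw [hst, lt_div_iff₀ (by positivity)]
    rw [lt_div_iff₀ (by positivity)] at hclt
    nlinarith
  have hqt : q < t := Real.sinh_lt_sinh.mp (by rw [← hsdef]; exact hsq_lt)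
  -- cosh t < t * s
  have hch_lt : Real.cosh t < t * s := by
    have hsub := Real.sinh_sub q t
    rw [← hsdef] at hsub
    have hneg : Real.sinh (q - t) < 0 := Real.sinh_neg_iff.mpr (by linarith)
    have hcq : Real.cosh q = q * Real.sinh q := by
      field_simp at hcoth; linarith
    have h5 : Real.sinh q * Real.cosh t < Real.sinh q * (q * s) := by nlinarith
    have h6 : Real.cosh t < q * s := lt_of_mul_lt_mul_left h5 hsq.le
    nlinarith
  -- Part 1 : t < b2
  have part1 : t < b2 := by
    by_contra hle
    push_neg at hle
    have hd : 0 < b2 - b1 := by linarith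
    have id1 : Real.cosh b2 - Real.cosh b1 =
        2 * Real.sinh ((b1 + b2) / 2) * Real.sinh ((b2 - b1) / 2) := by
      have hA := Real.cosh_add ((b1 + b2) / 2) ((b2 - b1) / 2)
      have hB := Real.cosh_sub ((b1 + b2) / 2) ((b2 - b1) / 2)
      rw [show (b1 + b2) / 2 + (b2 - b1) / 2 = b2 by ring] at hA
      rw [show (b1 + b2) / 2 - (b2 - b1) / 2 = b1 by ring] at hB
      linarith
    have id2 : Real.cosh t - Real.cosh (t - (b2 - b1)) =
        2 * Real.sinh (t - (b2 - b1) / 2) * Real.sinh ((b2 - b1) / 2) := by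
      have hA := Real.cosh_add (t - (b2 - b1) / 2) ((b2 - b1) / 2)
      have hB := Real.cosh_sub (t - (b2 - b1) / 2) ((b2 - b1) / 2)
      rw [show t - (b2 - b1) / 2 + (b2 - b1) / 2 = t by ring] at hA
      rw [show t - (b2 - b1) / 2 - (b2 - b1) / 2 = t - (b2 - b1) by ring] at hB
      linarith
    have hmono : Real.sinh ((b1 + b2) / 2) ≤ Real.sinh (t - (b2 - b1) / 2) :=
      Real.sinh_le_sinh.mpr (by linarith)
    have hBpos : 0 < Real.sinh ((b2 - b1) / 2) := Real.sinh_pos_iff.mpr (by linarith)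
    have hL1 := aux_L1 t (b2 - b1) ht0 hd
    rw [← hsdef] at hL1
    have hprod := mul_le_mul_of_nonneg_right hmono hBpos.le
    nlinarith
  -- Part 2
  have hd2 : 0 < b2 - t := by linarith
  have hL2 := aux_L2 t (b2 - t) ht0.le hd2.le
  rw [show t + (b2 - t) = b2 by ring, ← hsdef] at hL2
  have hkey : Real.cosh t * (b2 - t) ^ 2 ≤ 2 * (t * s - Real.cosh t) := by
    nlinarith [eq2, hL2]
  have hch1 : 1 < Real.cosh t := Real.one_lt_cosh.mpr (ne_of_gt ht0)
  have hc2 : Real.cosh t ^ 2 = s ^ 2 + 1 := by rw [hsdef]; exact Real.cosh_sq t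
  have hXpos : 0 < Real.cosh t * (t * s - 1) ^ 2 - 2 * s ^ 2 * (t * s - Real.cosh t) := by
    have hident : Real.cosh t *
        (Real.cosh t * (t * s - 1) ^ 2 - 2 * s ^ 2 * (t * s - Real.cosh t))
        = (Real.cosh t * (t * s) - Real.cosh t - s ^ 2) ^ 2
          + s ^ 2 * (Real.cosh t - 1) ^ 2 := by
      linear_combination s ^ 2 * hc2
    by_contra h
    push_neg at h
    have hchpos := Real.cosh_pos t
    nlinarith [mul_nonneg hchpos.le (neg_nonneg.mpr h),
      sq_nonneg (Real.cosh t * (t * s) - Real.cosh t - s ^ 2),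
      mul_pos (pow_pos hs_pos 2) (pow_pos (by linarith : (0:ℝ) < Real.cosh t - 1) 2)]
  have hu1 : 0 < t * s - 1 := by linarith
  have hsd2 : (s * (b2 - t)) ^ 2 < (t * s - 1) ^ 2 := by
    have hchpos := Real.cosh_pos t
    nlinarith [mul_le_mul_of_nonneg_left hkey (sq_nonneg s)]
  have hfin : s * (b2 - t) < t * s - 1 :=
    lt_of_pow_lt_pow_left₀ 2 hu1.le hsd2
  constructor
  · rw [hxs2, hx2b]; nlinarith
  · rw [hxs2, hx2b]; nlinarith
end

section
/- Let a be a positive real number with a ≠ 1, define f : ℝ → ℝ by f(x) = a^x + a^{-x} - x, and set x* = arcsinh(1/(2*ln a)) / ln a. Then for every t > 0, f(x* + t) > f(x* - t); that is, f grows faster to the right of its minimizer than to the left. -/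
theorem stmt_15 (a : ℝ) (ha : 0 < a) (ha1 : a ≠ 1)
    (f : ℝ → ℝ) (hf : f = fun x : ℝ => a ^ x + a ^ (-x) - x)
    (xs : ℝ) (hxs : xs = Real.arsinh (1 / (2 * Real.log a)) / Real.log a) :
    ∀ t : ℝ, 0 < t → f (xs + t) > f (xs - t) := by
  intro t ht
  subst hf
  set L := Real.log a with hLdef
  have hL0 : L ≠ 0 := Real.log_ne_zero_of_pos_of_ne_one ha ha1
  have hsinh : Real.sinh (L * xs) = 1 / (2 * L) := by
    rw [hxs, mul_div_cancel₀ _ hL0, Real.sinh_arsinh]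
  have hr : ∀ x : ℝ, a ^ x = Real.exp (L * x) := fun x => by
    rw [Real.rpow_def_of_pos ha, mul_comm]
  simp only [hr]
  have key : Real.exp (L * (xs + t)) + Real.exp (L * (-(xs + t)))
      - (Real.exp (L * (xs - t)) + Real.exp (L * (-(xs - t))))
      = 4 * Real.sinh (L * xs) * Real.sinh (L * t) := by
    simp only [Real.sinh_eq, mul_add, mul_sub, mul_neg, neg_add, neg_sub,
      Real.exp_add, Real.exp_sub, Real.exp_neg]
    have h1 := Real.exp_ne_zero (L * xs)
    have h2 := Real.exp_ne_zero (L * t)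
    field_simp
    ring
  have hst : t < Real.sinh (L * t) / L := by
    rcases hL0.lt_or_gt with hLneg | hLpos
    · rw [lt_div_iff_of_neg hLneg]
      have h : Real.sinh (L*t) < L*t := Real.sinh_lt_self_iff.mpr (by nlinarith)
      nlinarith
    · rw [lt_div_iff₀ hLpos]
      have h : L*t < Real.sinh (L*t) := Real.self_lt_sinh_iff.mpr (by positivity)
      nlinarith
  have h4 : 4 * (1 / (2 * L)) * Real.sinh (L * t) = 2 * (Real.sinh (L * t) / L) := by
    field_simp; ring
  rw [hsinh, h4] at key
  simp only [gt_iff_lt]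
  linarith
end
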